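/- For every ℓ ∈ [0, 1], the thermodynamic nonlocal-magic density 𝒥(ℓ) = −(1/(2π)) ∫₀^{x̃} log(1 − x + x²) · √((x̃ − x)/x)/(1 − x) dx, with x̃ = 4ℓ(1 − ℓ), satisfies 𝒥(ℓ) ≤ 𝒥(1/2) = log(8 − 4√3); i.e. the average nonlocal magic density of the Gaussian Haar ensemble is maximal at the symmetric bipartition. -/

import Mathlib

/-!
Put `b = 4ℓ(1 - ℓ) ∈ [0, 1]`. On `[0, 1]` the factor `log (1 - x + x²)` is nonpositive and the
weight `√((b - x) / x) / (1 - x)` is increasing in `b`, so on `[0, b]` the integrand for `b` dominates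
the integrand for `b = 1`, and the latter is nonpositive on `[b, 1]`. Hence
`∫₀¹ ≤ ∫₀ᵇ`, which is `𝒥(ℓ) ≤ 𝒥(1/2)` after multiplying by `-1/(2π)`. The singularities at the
endpoints are harmless because the integrand is bounded by `2√(x(1 - x))`.

For the value, `x = sin² t` turns `∫₀¹` into `2 ∫₀^{π/2} log (1 - sin² t + sin⁴ t) dt`. With
`r = 7 - 4√3`, a root of `r² - 14r + 1`, one has `16r (1 - sin² t + sin⁴ t) = |1 + r e^{4it}|²`,
and since `|r| < 1` the logarithm of the latter has mean zero over a period.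
-/

open Real intervalIntegral

/-- The thermodynamic nonlocal-magic density of the Gaussian Haar ensemble at
bipartition fraction ℓ, with x̃ = 4ℓ(1−ℓ). -/
noncomputable def nonlocalMagicDensity (ℓ : ℝ) : ℝ :=
  -(1 / (2 * Real.pi)) *
    ∫ x in (0 : ℝ)..(4 * ℓ * (1 - ℓ)),
      Real.log (1 - x + x ^ 2) * (Real.sqrt ((4 * ℓ * (1 - ℓ) - x) / x) / (1 - x))

open Set

noncomputable def magicIntegrand (b x : ℝ) : ℝ :=
  log (1 - x + x ^ 2) * (√((b - x) / x) / (1 - x))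

lemma nonlocalMagicDensity_eq_integral (ℓ : ℝ) :
    nonlocalMagicDensity ℓ =
      -(1 / (2 * π)) * ∫ x in (0 : ℝ)..4 * ℓ * (1 - ℓ), magicIntegrand (4 * ℓ * (1 - ℓ)) x :=
  rfl

lemma nonlocalMagicDensity_half_eq_integral :
    nonlocalMagicDensity (1 / 2) = -(1 / (2 * π)) * ∫ x in (0 : ℝ)..1, magicIntegrand 1 x := by
  norm_num [nonlocalMagicDensity_eq_integral]

lemma continuousWithinAt_of_abs_le {α : Type*} [TopologicalSpace α] {f g : α → ℝ} {s : Set α}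
    {a : α} (hfa : f a = 0) (hg : ContinuousAt g a) (hga : g a = 0)
    (hfg : ∀ x ∈ s, |f x| ≤ g x) : ContinuousWithinAt f s a := by
  rw [ContinuousWithinAt, hfa]
  exact squeeze_zero_norm' (eventually_nhdsWithin_of_forall hfg)
    ((hga ▸ hg.tendsto).mono_left nhdsWithin_le_nhds)

section Integrand

variable {b x : ℝ}

lemma log_one_sub_add_sq_nonpos (hx0 : 0 ≤ x) (hx1 : x ≤ 1) : log (1 - x + x ^ 2) ≤ 0 :=
  log_nonpos (by nlinarith) (by nlinarith)

lemma neg_log_one_sub_add_sq_le (hx0 : 0 ≤ x) (hx1 : x ≤ 1) :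
    -log (1 - x + x ^ 2) ≤ 2 * (x * (1 - x)) := by
  have hpos : 0 < 1 - x + x ^ 2 := by nlinarith
  calc -log (1 - x + x ^ 2) = log (1 - x + x ^ 2)⁻¹ := (log_inv _).symm
    _ ≤ (1 - x + x ^ 2)⁻¹ - 1 := log_le_sub_one_of_pos (inv_pos.2 hpos)
    _ = x * (1 - x) / (1 - x + x ^ 2) := by field_simp; ring
    _ ≤ 2 * (x * (1 - x)) := by
      rw [div_le_iff₀ hpos]
      nlinarith [mul_nonneg (mul_nonneg hx0 (sub_nonneg.2 hx1))
        (add_nonneg (sq_nonneg (1 - x)) (sq_nonneg x))]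

lemma sqrt_div_div_one_sub_nonneg (hx1 : x ≤ 1) : 0 ≤ √((b - x) / x) / (1 - x) :=
  div_nonneg (sqrt_nonneg _) (sub_nonneg.2 hx1)

lemma sqrt_div_div_one_sub_le (hb : b ≤ 1) (hx0 : 0 ≤ x) (hx1 : x ≤ 1) :
    √((b - x) / x) / (1 - x) ≤ √((1 - x) / x) / (1 - x) :=
  div_le_div_of_nonneg_right (sqrt_le_sqrt (div_le_div_of_nonneg_right (by linarith) hx0))
    (sub_nonneg.2 hx1)

lemma mul_one_sub_mul_sqrt_div_div_one_sub (hx0 : 0 ≤ x) (hx1 : x ≤ 1) :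
    x * (1 - x) * (√((1 - x) / x) / (1 - x)) = √(x * (1 - x)) := by
  rcases hx0.eq_or_lt with rfl | hx0
  · simp
  rcases hx1.eq_or_lt with rfl | hx1
  · simp
  calc x * (1 - x) * (√((1 - x) / x) / (1 - x)) = x * √((1 - x) / x) := by
        field_simp [(by linarith : 1 - x ≠ 0)]
    _ = √(x * (1 - x)) := by
        rw [show x * (1 - x) = x ^ 2 * ((1 - x) / x) by field_simp, sqrt_mul (sq_nonneg x),
          sqrt_sq hx0.le]

lemma magicIntegrand_nonpos (hx0 : 0 ≤ x) (hx1 : x ≤ 1) : magicIntegrand b x ≤ 0 :=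
  mul_nonpos_of_nonpos_of_nonneg (log_one_sub_add_sq_nonpos hx0 hx1)
    (sqrt_div_div_one_sub_nonneg hx1)

lemma magicIntegrand_one_le (hb : b ≤ 1) (hx0 : 0 ≤ x) (hx1 : x ≤ 1) :
    magicIntegrand 1 x ≤ magicIntegrand b x :=
  mul_le_mul_of_nonpos_left (sqrt_div_div_one_sub_le hb hx0 hx1)
    (log_one_sub_add_sq_nonpos hx0 hx1)

lemma abs_magicIntegrand_le (hb : b ≤ 1) (hx0 : 0 ≤ x) (hx1 : x ≤ 1) :
    |magicIntegrand b x| ≤ 2 * √(x * (1 - x)) :=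
  calc |magicIntegrand b x| = -log (1 - x + x ^ 2) * (√((b - x) / x) / (1 - x)) := by
        rw [magicIntegrand, abs_mul, abs_of_nonpos (log_one_sub_add_sq_nonpos hx0 hx1),
          abs_of_nonneg (sqrt_div_div_one_sub_nonneg hx1)]
    _ ≤ 2 * (x * (1 - x)) * (√((1 - x) / x) / (1 - x)) :=
        mul_le_mul (neg_log_one_sub_add_sq_le hx0 hx1) (sqrt_div_div_one_sub_le hb hx0 hx1)
          (sqrt_div_div_one_sub_nonneg hx1) (by nlinarith)
    _ = 2 * √(x * (1 - x)) := by
        rw [mul_assoc, mul_one_sub_mul_sqrt_div_div_one_sub hx0 hx1]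

lemma magicIntegrand_continuousAt (hx0 : 0 < x) (hx1 : x < 1) :
    ContinuousAt (magicIntegrand b) x := by
  have hlog : 1 - x + x ^ 2 ≠ 0 := by nlinarith
  have hsub : 1 - x ≠ 0 := by linarith
  unfold magicIntegrand
  fun_prop (disch := first | assumption | exact hx0.ne')

lemma magicIntegrand_continuousOn (hb : b ≤ 1) : ContinuousOn (magicIntegrand b) (Icc 0 1) := by
  intro x hx
  have hbound : ∀ y ∈ Icc (0 : ℝ) 1, |magicIntegrand b y| ≤ 2 * √(y * (1 - y)) :=
    fun y hy => abs_magicIntegrand_le hb hy.1 hy.2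
  have hcont : Continuous fun y : ℝ => 2 * √(y * (1 - y)) := by fun_prop
  rcases hx.1.eq_or_lt with rfl | hx0
  · exact continuousWithinAt_of_abs_le (by simp [magicIntegrand]) hcont.continuousAt (by simp)
      hbound
  rcases hx.2.eq_or_lt with rfl | hx1
  · exact continuousWithinAt_of_abs_le (by simp [magicIntegrand]) hcont.continuousAt (by simp)
      hbound
  exact (magicIntegrand_continuousAt hx0 hx1).continuousWithinAt

lemma magicIntegrand_intervalIntegrable (hb : b ≤ 1) {c d : ℝ} (hc : c ∈ Icc (0 : ℝ) 1)
    (hd : d ∈ Icc (0 : ℝ) 1) : IntervalIntegrable (magicIntegrand b) MeasureTheory.volume c d :=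
  ((magicIntegrand_continuousOn hb).mono (uIcc_subset_Icc hc hd)).intervalIntegrable

lemma integral_magicIntegrand_one_le (hb0 : 0 ≤ b) (hb1 : b ≤ 1) :
    ∫ x in (0 : ℝ)..1, magicIntegrand 1 x ≤ ∫ x in (0 : ℝ)..b, magicIntegrand b x := by
  have h0 : (0 : ℝ) ∈ Icc (0 : ℝ) 1 := left_mem_Icc.2 zero_le_one
  have h1 : (1 : ℝ) ∈ Icc (0 : ℝ) 1 := right_mem_Icc.2 zero_le_one
  have hb : b ∈ Icc (0 : ℝ) 1 := ⟨hb0, hb1⟩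
  have hhead : ∫ x in (0 : ℝ)..b, magicIntegrand 1 x ≤ ∫ x in (0 : ℝ)..b, magicIntegrand b x :=
    integral_mono_on hb0 (magicIntegrand_intervalIntegrable le_rfl h0 hb)
      (magicIntegrand_intervalIntegrable hb1 h0 hb)
      fun x hx => magicIntegrand_one_le hb1 hx.1 (hx.2.trans hb1)
  have htail : ∫ x in b..1, magicIntegrand 1 x ≤ ∫ _ in b..1, (0 : ℝ) :=
    integral_mono_on hb1 (magicIntegrand_intervalIntegrable le_rfl hb h1) intervalIntegrable_const
      fun x hx => magicIntegrand_nonpos (hb0.trans hx.1) hx.2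
  rw [← integral_add_adjacent_intervals (magicIntegrand_intervalIntegrable le_rfl h0 hb)
    (magicIntegrand_intervalIntegrable le_rfl hb h1)]
  simp only [integral_zero] at htail
  linarith

end Integrand

theorem integral_log_one_add_sq_add_two_mul_cos {r : ℝ} (hr : |r| < 1) :
    ∫ θ in (0 : ℝ)..2 * π, log (1 + r ^ 2 + 2 * r * cos θ) = 0 := by
  have hnorm (θ : ℝ) : log (1 + r ^ 2 + 2 * r * cos θ) = 2 * log ‖circleMap 0 1 θ + r‖ := by
    have hsq : ‖circleMap 0 1 θ + r‖ ^ 2 = 1 + r ^ 2 + 2 * r * cos θ := by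
      rw [← Complex.normSq_eq_norm_sq, Complex.normSq_apply]
      simp only [Complex.add_re, Complex.add_im, circleMap_zero_re, circleMap_zero_im,
        Complex.ofReal_re, Complex.ofReal_im]
      nlinarith [sin_sq_add_cos_sq θ]
    rw [← hsq, Real.log_pow, Nat.cast_ofNat]
  have hmean : circleAverage (log ‖· + (r : ℂ)‖) 0 1 = 0 := by
    rw [circleAverage_log_norm_add_const_eq_posLog, posLog_eq_zero_iff]
    simpa using hr.le
  rw [circleAverage_def, smul_eq_mul, mul_eq_zero] at hmean
  simp_rw [hnorm, integral_const_mul]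
  simp [hmean.resolve_left (by positivity)]

lemma mul_one_sub_sin_sq_add_sin_sq_sq {r : ℝ} (hr : 1 + r ^ 2 = 14 * r) (t : ℝ) :
    16 * r * (1 - sin t ^ 2 + (sin t ^ 2) ^ 2) = 1 + r ^ 2 + 2 * r * cos (4 * t) := by
  rw [hr, show 4 * t = 2 * (2 * t) by ring, cos_two_mul, cos_two_mul, cos_sq']
  ring

lemma two_mul_sin_mul_cos_mul_magicIntegrand_one_sin_sq {t : ℝ} (ht : t ∈ Icc 0 (π / 2)) :
    2 * sin t * cos t * magicIntegrand 1 (sin t ^ 2) =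
      2 * log (1 - sin t ^ 2 + (sin t ^ 2) ^ 2) := by
  rcases ht.1.eq_or_lt with rfl | ht0
  · simp
  rcases ht.2.eq_or_lt with rfl | ht1
  · simp
  have hsin : 0 < sin t := sin_pos_of_pos_of_lt_pi ht0 (by linarith [pi_pos])
  have hcos : 0 < cos t := cos_pos_of_mem_Ioo ⟨by linarith [pi_pos], ht1⟩
  rw [magicIntegrand, ← cos_sq', ← div_pow, sqrt_sq (by positivity)]
  field_simp

lemma integral_magicIntegrand_one_eq_integral_sin :
    ∫ x in (0 : ℝ)..1, magicIntegrand 1 x =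
      ∫ t in (0 : ℝ)..π / 2, 2 * log (1 - sin t ^ 2 + (sin t ^ 2) ^ 2) := by
  have hderiv (t : ℝ) (_ : t ∈ uIcc 0 (π / 2)) :
      HasDerivAt (fun t => sin t ^ 2) (2 * sin t * cos t) t :=
    ((hasDerivAt_sin t).fun_pow 2).congr_deriv (by ring)
  have hmaps : ContinuousOn (magicIntegrand 1) ((fun t => sin t ^ 2) '' uIcc 0 (π / 2)) :=
    (magicIntegrand_continuousOn le_rfl).mono <| by
      rintro _ ⟨t, -, rfl⟩
      exact ⟨sq_nonneg _, by nlinarith [sin_le_one t, neg_one_le_sin t]⟩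
  have hsubst := integral_deriv_smul_comp' hderiv (by fun_prop) hmaps
  norm_num [Function.comp] at hsubst
  rw [← hsubst]
  refine integral_congr fun t ht => ?_
  rw [uIcc_of_le (by positivity)] at ht
  exact two_mul_sin_mul_cos_mul_magicIntegrand_one_sin_sq ht

lemma integral_magicIntegrand_one :
    ∫ x in (0 : ℝ)..1, magicIntegrand 1 x = -(2 * π) * log (8 - 4 * √3) := by
  have h3 : √3 ^ 2 = 3 := sq_sqrt (by norm_num)
  have h3lo : 3 / 2 < √3 := by nlinarith [sqrt_nonneg 3]
  have h3hi : √3 < 7 / 4 := by nlinarith [sqrt_nonneg 3]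
  set r := 7 - 4 * √3 with hr_def
  have hr0 : 0 < r := by linarith
  have hr : 1 + r ^ 2 = 14 * r := by nlinarith
  have hlog (t : ℝ) : 2 * log (1 - sin t ^ 2 + (sin t ^ 2) ^ 2)
      = 2 * log (1 + r ^ 2 + 2 * r * cos (4 * t)) - 2 * log (16 * r) := by
    rw [← mul_one_sub_sin_sq_add_sin_sq_sq hr,
      log_mul (by positivity) (by nlinarith [sq_nonneg (sin t ^ 2 - 1 / 2)])]
    ring
  have hcos : ∫ t in (0 : ℝ)..π / 2, log (1 + r ^ 2 + 2 * r * cos (4 * t)) = 0 := by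
    rw [integral_comp_mul_left (fun u => log (1 + r ^ 2 + 2 * r * cos u)) four_ne_zero,
      mul_zero, show 4 * (π / 2) = 2 * π by ring,
      integral_log_one_add_sq_add_two_mul_cos (by rw [abs_lt]; constructor <;> linarith),
      smul_zero]
  have hcont : Continuous fun t => 2 * log (1 + r ^ 2 + 2 * r * cos (4 * t)) := by
    refine continuous_const.mul (Continuous.log (by fun_prop) fun t => ?_)
    nlinarith [neg_one_le_cos (4 * t), sq_nonneg (1 - r)]
  have h16 : 16 * r = (8 - 4 * √3) ^ 2 := by nlinarith
  rw [integral_magicIntegrand_one_eq_integral_sin, integral_congr fun t _ => hlog t,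
    integral_sub (hcont.intervalIntegrable _ _) intervalIntegrable_const, integral_const_mul, hcos,
    integral_const, smul_eq_mul, h16, log_pow]
  push_cast
  ring

lemma nonlocalMagicDensity_half : nonlocalMagicDensity (1 / 2) = log (8 - 4 * √3) := by
  rw [nonlocalMagicDensity_half_eq_integral, integral_magicIntegrand_one]
  field_simp

/-- The average nonlocal magic density of the Gaussian Haar ensemble is maximal at
the symmetric bipartition: 𝒥(ℓ) ≤ 𝒥(1/2) = log(8 − 4√3) for all ℓ ∈ [0,1]. -/
theorem nonlocal_magic_density_max_at_half :
    ∀ ℓ ∈ Set.Icc (0 : ℝ) 1,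
      nonlocalMagicDensity ℓ ≤ nonlocalMagicDensity (1 / 2) ∧
      nonlocalMagicDensity (1 / 2) = Real.log (8 - 4 * Real.sqrt 3) := by
  rintro ℓ ⟨hℓ0, hℓ1⟩
  have hb0 : 0 ≤ 4 * ℓ * (1 - ℓ) := by nlinarith
  have hb1 : 4 * ℓ * (1 - ℓ) ≤ 1 := by nlinarith [sq_nonneg (2 * ℓ - 1)]
  refine ⟨?_, nonlocalMagicDensity_half⟩
  rw [nonlocalMagicDensity_eq_integral, nonlocalMagicDensity_half_eq_integral]
  exact mul_le_mul_of_nonpos_left (integral_magicIntegrand_one_le hb0 hb1)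
    (by simpa using pi_pos.le)
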